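/- Let (M, φ) be a diffuse separable W*-probability space. If (M, φ) is selfless, then M is a factor, i.e. the center of M equals ℂ1. -/

import Mathlib

/-!
Self-contained framework for W*-probability spaces, following
Houdayer–Marrakchi, "Selfless W*-probability spaces and Connes' bicentralizer problem".

A W*-probability space is a von Neumann algebra `M ⊆ B(H)` together with a
faithful normal state `φ`.  Normality of a functional on `B(H)` is encoded by
the (standard, equivalent) requirement that it is of trace-class vector form.
-/

noncomputable section

/-- A linear functional on `B(H)` is normal (σ-weakly continuous) iff it has a
trace-class vector form `φ(x) = ∑ ⟨ξ n, x (η n)⟩` with square-summable families. -/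
def IsNormalFunctional (H : Type) [NormedAddCommGroup H] [InnerProductSpace ℂ H]
    [CompleteSpace H] (φ : (H →L[ℂ] H) → ℂ) : Prop :=
  ∃ ξ η : ℕ → H, Summable (fun n => ‖ξ n‖ ^ 2) ∧ Summable (fun n => ‖η n‖ ^ 2) ∧
    ∀ x : H →L[ℂ] H, φ x = ∑' n, (inner ℂ (ξ n) (x (η n)) : ℂ)

/-- A W*-probability space: a von Neumann algebra `M` acting on a complex Hilbert
space `H`, together with a faithful normal state `φ` (given as a functional on `B(H)`). -/
structure WStarProb where
  (H : Type)
  [normedH : NormedAddCommGroup H]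
  [innerH : InnerProductSpace ℂ H]
  [completeH : CompleteSpace H]
  (M : VonNeumannAlgebra H)
  (φ : (H →L[ℂ] H) → ℂ)
  (φ_linear : IsLinearMap ℂ φ)
  (φ_one : φ 1 = 1)
  (φ_pos : ∀ x ∈ M, 0 ≤ (φ (star x * x)).re ∧ (φ (star x * x)).im = 0)
  (φ_faithful : ∀ x ∈ M, φ (star x * x) = 0 → x = 0)
  (φ_normal : IsNormalFunctional H φ)

attribute [instance] WStarProb.normedH WStarProb.innerH WStarProb.completeH

namespace WStarProb

/-- A faithful normal state on (the von Neumann algebra of) a W*-probability space. -/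
structure IsFNState (A : WStarProb) (ψ : (A.H →L[ℂ] A.H) → ℂ) : Prop where
  linear : IsLinearMap ℂ ψ
  one : ψ 1 = 1
  pos : ∀ x ∈ A.M, 0 ≤ (ψ (star x * x)).re ∧ (ψ (star x * x)).im = 0
  faithful : ∀ x ∈ A.M, ψ (star x * x) = 0 → x = 0
  normal : IsNormalFunctional A.H ψ

/-- Replace the state of a W*-probability space by another faithful normal state. -/
def withState (A : WStarProb) (ψ : (A.H →L[ℂ] A.H) → ℂ) (h : A.IsFNState ψ) : WStarProb where
  H := A.H
  M := A.M
  φ := ψ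
  φ_linear := h.linear
  φ_one := h.one
  φ_pos := h.pos
  φ_faithful := h.faithful
  φ_normal := h.normal

/-- Separability of a W*-probability space (separable predual), encoded by
separability of the underlying Hilbert space. -/
def Separable (A : WStarProb) : Prop := TopologicalSpace.SeparableSpace A.H

/-- Diffuseness: the von Neumann algebra has no minimal projections, i.e. every
nonzero projection dominates a nonzero strictly smaller projection. -/
def Diffuse (A : WStarProb) : Prop :=
  ∀ p : A.H →L[ℂ] A.H, p ∈ A.M → star p = p → p * p = p → p ≠ 0 →
    ∃ q : A.H →L[ℂ] A.H, q ∈ A.M ∧ star q = q ∧ q * q = q ∧ q ≠ 0 ∧ q ≠ p ∧ q * p = q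

/-- Nontriviality: `M ≠ ℂ1`. -/
def NontrivialAlg (A : WStarProb) : Prop :=
  ∃ x ∈ A.M, ∀ c : ℂ, x ≠ c • (1 : A.H →L[ℂ] A.H)

/-- The set `ℂ1` of scalar operators. -/
def ScalarSet (A : WStarProb) : Set (A.H →L[ℂ] A.H) :=
  {x | ∃ c : ℂ, x = c • (1 : A.H →L[ℂ] A.H)}

/-- `M` is a factor: its center is trivial. -/
def IsFactor (A : WStarProb) : Prop :=
  ∀ z ∈ A.M, (∀ x ∈ A.M, z * x = x * z) → z ∈ A.ScalarSet

/-- The norm of a linear functional on `M`, i.e. the sup of `‖f y‖` over the unit ball of `M`. -/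
def fnNorm (A : WStarProb) (f : (A.H →L[ℂ] A.H) → ℂ) : ℝ :=
  sSup {r : ℝ | ∃ y ∈ A.M, ‖y‖ ≤ 1 ∧ r = ‖f y‖}

/-- The GNS seminorm `‖x‖_ψ = ψ(x* x)^{1/2}` associated with a state `ψ`. -/
def gnsNorm (A : WStarProb) (ψ : (A.H →L[ℂ] A.H) → ℂ) (x : A.H →L[ℂ] A.H) : ℝ :=
  Real.sqrt (ψ (star x * x)).re

/-- Haagerup's bicentralizer of the state `ψ` on `M`:  all `x ∈ M` such that for every
`ε > 0` there is `δ > 0` such that every unitary `u ∈ M` with `‖uψ - ψu‖ < δ`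
satisfies `‖ux - xu‖_ψ < ε`. -/
def Bicentralizer (A : WStarProb) (ψ : (A.H →L[ℂ] A.H) → ℂ) : Set (A.H →L[ℂ] A.H) :=
  {x | x ∈ A.M ∧ ∀ ε : ℝ, 0 < ε → ∃ δ : ℝ, 0 < δ ∧
    ∀ u ∈ A.M, star u * u = 1 → u * star u = 1 →
      A.fnNorm (fun y => ψ (y * u) - ψ (u * y)) < δ →
      A.gnsNorm ψ (u * x - x * u) < ε}

/-- The centralizer `M_ψ` of a faithful normal state `ψ`, characterized algebraically as
`{x ∈ M | ψ(xy) = ψ(yx) for all y ∈ M}` (the fixed points of the modular group of `ψ`). -/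
def stateCentralizer (A : WStarProb) (ψ : (A.H →L[ℂ] A.H) → ℂ) : Set (A.H →L[ℂ] A.H) :=
  {x | x ∈ A.M ∧ ∀ y ∈ A.M, ψ (x * y) = ψ (y * x)}

/-- Triviality of the relative commutant `S' ∩ M = ℂ1` of a subset `S ⊆ M`. -/
def TrivialRelCommutant (A : WStarProb) (S : Set (A.H →L[ℂ] A.H)) : Prop :=
  ∀ z ∈ A.M, (∀ x ∈ S, z * x = x * z) → z ∈ A.ScalarSet

/-- The set of `μ`-eigenvectors of the modular group of `ψ`:
`x ∈ M` with `ψ(xy) = μ ψ(yx)` for all `y ∈ M`. -/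
def eigSet (A : WStarProb) (ψ : (A.H →L[ℂ] A.H) → ℂ) (μ : ℝ) : Set (A.H →L[ℂ] A.H) :=
  {x | x ∈ A.M ∧ ∀ y ∈ A.M, ψ (x * y) = (μ : ℂ) * ψ (y * x)}

/-- `ψ` is `2π/|log λ|`-periodic: `M` is generated (double commutant) by the
eigenvectors of `ψ` with eigenvalues in `λ^ℤ`. -/
def IsPeriodicState (A : WStarProb) (ψ : (A.H →L[ℂ] A.H) → ℂ) (l : ℝ) : Prop :=
  (A.M : Set (A.H →L[ℂ] A.H)) =
    Set.centralizer (Set.centralizer (⋃ n : ℤ, A.eigSet ψ (l ^ n)))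

/-- `(M, φ)` is a type `III_λ` factor (`0 < λ < 1`) endowed with its
`2π/|log λ|`-periodic faithful normal state. -/
def IsPeriodicTypeIIILambda (A : WStarProb) (l : ℝ) : Prop :=
  0 < l ∧ l < 1 ∧ A.IsFactor ∧ (∃ x ∈ A.eigSet A.φ l, x ≠ 0) ∧ A.IsPeriodicState A.φ l

/-- The state of `A` is a trace. -/
def IsTracial (A : WStarProb) : Prop :=
  ∀ x ∈ A.M, ∀ y ∈ A.M, A.φ (x * y) = A.φ (y * x)

/-- The von Neumann algebra `M` is infinite dimensional. -/
def InfiniteDim (A : WStarProb) : Prop :=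
  ∀ S : Finset (A.H →L[ℂ] A.H), ∃ x ∈ A.M, x ∉ Submodule.span ℂ (S : Set (A.H →L[ℂ] A.H))

/-- Connes–Størmer homogeneity of the (faithful) normal state space: any two faithful
normal states are approximately unitarily equivalent. -/
def StateHomogeneous (A : WStarProb) : Prop :=
  ∀ ψ₁ ψ₂ : (A.H →L[ℂ] A.H) → ℂ, A.IsFNState ψ₁ → A.IsFNState ψ₂ → ∀ ε : ℝ, 0 < ε →
    ∃ u ∈ A.M, star u * u = 1 ∧ u * star u = 1 ∧
      A.fnNorm (fun y => ψ₁ (star u * (y * u)) - ψ₂ y) < ε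

/-- `M` is a type `III₁` factor: a nontrivial factor with homogeneous normal state
space (Connes–Størmer). -/
def IsTypeIII1Factor (A : WStarProb) : Prop :=
  A.IsFactor ∧ A.NontrivialAlg ∧ A.StateHomogeneous

/-- `p` is a (self-adjoint idempotent) projection belonging to `M`. -/
def IsProjectionIn (A : WStarProb) (p : A.H →L[ℂ] A.H) : Prop :=
  p ∈ A.M ∧ star p = p ∧ p * p = p

/-- Murray–von Neumann equivalence of projections in `M`. -/
def MvNEquiv (A : WStarProb) (p q : A.H →L[ℂ] A.H) : Prop :=
  ∃ v ∈ A.M, star v * v = p ∧ v * star v = q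

/-- A finite projection of `M`: not equivalent to a proper subprojection. -/
def FiniteProjection (A : WStarProb) (p : A.H →L[ℂ] A.H) : Prop :=
  A.IsProjectionIn p ∧
    ∀ q : A.H →L[ℂ] A.H, A.IsProjectionIn q → q * p = q → A.MvNEquiv p q → q = p

/-- An abelian projection of `M`: `pMp` is commutative. -/
def AbelianProjection (A : WStarProb) (p : A.H →L[ℂ] A.H) : Prop :=
  A.IsProjectionIn p ∧
    ∀ x ∈ A.M, ∀ y ∈ A.M, p * x * p * (p * y * p) = p * y * p * (p * x * p)

/-- A central projection of `M`. -/
def CentralProjection (A : WStarProb) (z : A.H →L[ℂ] A.H) : Prop :=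
  A.IsProjectionIn z ∧ ∀ x ∈ A.M, z * x = x * z

/-- `M` is of type `II_∞`: no nonzero abelian projections (type `II`), semifinite
(every nonzero projection dominates a nonzero finite projection), and properly
infinite (no nonzero finite central projection). -/
def IsTypeIIInfinity (A : WStarProb) : Prop :=
  (∀ p, A.AbelianProjection p → p = 0) ∧
  (∀ p, A.IsProjectionIn p → p ≠ 0 →
    ∃ q, q ≠ 0 ∧ q * p = q ∧ A.FiniteProjection q) ∧
  (∀ z, A.CentralProjection z → z ≠ 0 → ¬ A.FiniteProjection z)

/-- `M` is of type `III`: it has no nonzero finite projection. -/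
def IsTypeIII (A : WStarProb) : Prop :=
  ∀ p, A.FiniteProjection p → p = 0

/-- `M` admits a periodic faithful normal state (characteristic of type `III_λ`, `0<λ<1`). -/
def HasPeriodicState (A : WStarProb) : Prop :=
  ∃ l : ℝ, 0 < l ∧ l < 1 ∧ ∃ ψ : (A.H →L[ℂ] A.H) → ℂ, A.IsFNState ψ ∧
    (∃ x ∈ A.eigSet ψ l, x ≠ 0) ∧ A.IsPeriodicState ψ l

/-- `M` is of type `III₀`: type `III`, not of type `III_λ` for any `0<λ<1`
(no periodic state) and not of type `III₁` (no state space homogeneity). -/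
def IsTypeIII0 (A : WStarProb) : Prop :=
  A.IsTypeIII ∧ ¬ A.HasPeriodicState ∧ ¬ A.StateHomogeneous

/-- `M` is amenable (injective): there is a norm-one projection `B(H) → M`. -/
def Amenable (A : WStarProb) : Prop :=
  ∃ E : (A.H →L[ℂ] A.H) → (A.H →L[ℂ] A.H), IsLinearMap ℂ E ∧
    (∀ x, E x ∈ A.M) ∧ (∀ x ∈ A.M, E x = x) ∧ (∀ x, ‖E x‖ ≤ ‖x‖)

end WStarProb

/-- A (unital, state-preserving, injective) embedding of W*-probability spaces.
Such a map is automatically normal, since the states are faithful and normal. -/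
structure WStarEmbedding (A B : WStarProb) where
  toFun : (A.H →L[ℂ] A.H) → (B.H →L[ℂ] B.H)
  mem' : ∀ x ∈ A.M, toFun x ∈ B.M
  add' : ∀ x ∈ A.M, ∀ y ∈ A.M, toFun (x + y) = toFun x + toFun y
  smul' : ∀ (c : ℂ), ∀ x ∈ A.M, toFun (c • x) = c • toFun x
  mul' : ∀ x ∈ A.M, ∀ y ∈ A.M, toFun (x * y) = toFun x * toFun y
  star' : ∀ x ∈ A.M, toFun (star x) = star (toFun x)
  one' : toFun 1 = 1
  inj' : ∀ x ∈ A.M, toFun x = 0 → x = 0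
  state' : ∀ x ∈ A.M, B.φ (toFun x) = A.φ x

/-- The embedding `f : (A, φ) ↪ (B, ψ)` is an inclusion of W*-probability spaces:
there is a (automatically normal and faithful) state-preserving conditional
expectation of `B` onto the image of `A`. -/
def WStarEmbedding.HasExpectation {A B : WStarProb} (f : WStarEmbedding A B) : Prop :=
  ∃ E : (B.H →L[ℂ] B.H) → (B.H →L[ℂ] B.H),
    (∀ y ∈ B.M, ∃ x ∈ A.M, E y = f.toFun x) ∧
    (∀ x ∈ A.M, E (f.toFun x) = f.toFun x) ∧
    (∀ y ∈ B.M, ∀ z ∈ B.M, E (y + z) = E y + E z) ∧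
    (∀ (c : ℂ), ∀ y ∈ B.M, E (c • y) = c • E y) ∧
    (∀ y ∈ B.M, ∃ z ∈ B.M, E (star y * y) = star z * z) ∧
    (∀ y ∈ B.M, B.φ (E y) = B.φ y)

/-- Two subsets `S, T` of `(P, χ)` are *-freely independent with respect to the state `χ`:
alternating products of `χ`-centered elements of `S` and `T` are `χ`-centered. -/
def FreeSetsWith (P : WStarProb) (χ : (P.H →L[ℂ] P.H) → ℂ)
    (S T : Set (P.H →L[ℂ] P.H)) : Prop :=
  ∀ (n : ℕ) (x : Fin (n + 1) → (P.H →L[ℂ] P.H)) (c : Fin (n + 1) → Bool),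
    (∀ k, x k ∈ cond (c k) S T) → (∀ k, χ (x k) = 0) →
    (∀ k : Fin n, c k.succ ≠ c k.castSucc) →
    χ (List.ofFn x).prod = 0

/-- A realization of the von Neumann algebraic free product `(A, φ) * (B, ψ) = (P, χ)`:
state-preserving embeddings of `A` and `B` into `P` with *-free images that
generate `P` as a von Neumann algebra. -/
structure FreeProductData (A B P : WStarProb) where
  inl : WStarEmbedding A P
  inr : WStarEmbedding B P
  free : FreeSetsWith P P.φ (inl.toFun '' (A.M : Set (A.H →L[ℂ] A.H)))
    (inr.toFun '' (B.M : Set (B.H →L[ℂ] B.H)))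
  generates : (P.M : Set (P.H →L[ℂ] P.H)) =
    Set.centralizer (Set.centralizer
      (inl.toFun '' (A.M : Set (A.H →L[ℂ] A.H)) ∪ inr.toFun '' (B.M : Set (B.H →L[ℂ] B.H))))

/-- Bounded sequences (indexed by `I`) of elements of `M`. -/
def BddSeq (A : WStarProb) (I : Type) : Set (I → (A.H →L[ℂ] A.H)) :=
  {x | (∀ i, x i ∈ A.M) ∧ ∃ C : ℝ, ∀ i, ‖x i‖ ≤ C}

/-- A sequence is `*`-strongly null along the ultrafilter `U` (with respect to the
faithful normal state `φ`). -/
def StrongStarNull (A : WStarProb) {I : Type} (U : Ultrafilter I)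
    (x : I → (A.H →L[ℂ] A.H)) : Prop :=
  Filter.Tendsto (fun i => A.φ (star (x i) * x i + x i * star (x i)))
    (U : Filter I) (nhds 0)

/-- The multiplier algebra of the ideal of `*`-strongly null sequences inside the
bounded sequences; the Ocneanu ultrapower is its quotient by that ideal. -/
def MultiplierSeq (A : WStarProb) {I : Type} (U : Ultrafilter I) :
    Set (I → (A.H →L[ℂ] A.H)) :=
  {x | x ∈ BddSeq A I ∧ ∀ y ∈ BddSeq A I, StrongStarNull A U y →
    StrongStarNull A U (fun i => x i * y i) ∧ StrongStarNull A U (fun i => y i * x i)}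

/-- `q` realizes `(P, χ)` as the Ocneanu ultrapower `(M, φ)^U`: `q` is the quotient map
from the multiplier algebra of the `*`-strongly null sequences onto `P`, it is a surjective
unital `*`-homomorphism with kernel exactly the null sequences, and the state of `P` is the
ultralimit state. -/
def IsUltrapowerMap (A P : WStarProb) {I : Type} (U : Ultrafilter I)
    (q : (I → (A.H →L[ℂ] A.H)) → (P.H →L[ℂ] P.H)) : Prop :=
  (∀ x ∈ MultiplierSeq A U, q x ∈ P.M) ∧
  (∀ z ∈ P.M, ∃ x ∈ MultiplierSeq A U, q x = z) ∧
  (∀ x ∈ MultiplierSeq A U, ∀ y ∈ MultiplierSeq A U, q (x + y) = q x + q y) ∧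
  (∀ (c : ℂ), ∀ x ∈ MultiplierSeq A U, q (c • x) = c • q x) ∧
  (∀ x ∈ MultiplierSeq A U, ∀ y ∈ MultiplierSeq A U, q (x * y) = q x * q y) ∧
  (∀ x ∈ MultiplierSeq A U, q (fun i => star (x i)) = star (q x)) ∧
  (q (fun _ => 1) = 1) ∧
  (∀ x ∈ MultiplierSeq A U, (q x = 0 ↔ StrongStarNull A U x)) ∧
  (∀ x ∈ MultiplierSeq A U,
    Filter.Tendsto (fun i => A.φ (x i)) (U : Filter I) (nhds (P.φ (q x))))

/-- `(P, χ)` together with the diagonal embedding `d` is the Ocneanu ultrapower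
`(M, φ)^U` of `(A, φ)` along the ultrafilter `U`. -/
def IsUltrapower (A P : WStarProb) {I : Type} (U : Ultrafilter I)
    (d : WStarEmbedding A P) : Prop :=
  ∃ q : (I → (A.H →L[ℂ] A.H)) → (P.H →L[ℂ] P.H),
    IsUltrapowerMap A P U q ∧ ∀ m ∈ A.M, q (fun _ => m) = d.toFun m

/-- A nonprincipal ultrafilter. -/
def Nonprincipal {I : Type} (U : Ultrafilter I) : Prop :=
  ∀ i : I, (U : Filter I) ≠ pure i

/-- The inclusion `f : (A, φ) ⊆ (B, ψ)` of W*-probability spaces is existentially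
closed: for some nonprincipal ultrafilter `U` (on some index set `I`) there are
inclusions `(A, φ) ⊆ (B, ψ) ⊆ (A, φ)^U` whose composition is the diagonal inclusion. -/
def ExistentiallyClosed {A B : WStarProb} (f : WStarEmbedding A B) : Prop :=
  f.HasExpectation ∧
  ∃ (I : Type) (U : Ultrafilter I) (P : WStarProb) (d : WStarEmbedding A P)
    (g : WStarEmbedding B P),
      Nonprincipal U ∧ IsUltrapower A P U d ∧ g.HasExpectation ∧
      ∀ x ∈ A.M, g.toFun (f.toFun x) = d.toFun x

/-- A W*-probability space is selfless if the first factor inclusion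
`(M, φ) ⊆ (M, φ) * (M, φ)` is existentially closed. -/
def Selfless (A : WStarProb) : Prop :=
  ∃ (P : WStarProb) (fp : FreeProductData A A P), ExistentiallyClosed fp.inl

/-- `(B, ψ)` is a copy of `(L(ℤ), τ_ℤ)`: it is generated by a single Haar unitary. -/
def IsLZ (B : WStarProb) : Prop :=
  ∃ u : B.H →L[ℂ] B.H, u ∈ B.M ∧ star u * u = 1 ∧ u * star u = 1 ∧
    (∀ n : ℕ, B.φ (u ^ (n + 1)) = 0) ∧ (∀ n : ℕ, B.φ ((star u) ^ (n + 1)) = 0) ∧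
    (B.M : Set (B.H →L[ℂ] B.H)) =
      Set.centralizer (Set.centralizer
        {x | ∃ n : ℕ, x = u ^ n ∨ x = (star u) ^ n})

/-- The tensor product ultrafilter `V ⊗ U` on `ℕ × ℕ`. -/
def tensorUltrafilter (V U : Ultrafilter ℕ) : Ultrafilter (ℕ × ℕ) :=
  V.bind fun n => U.map fun m => (n, m)

end

noncomputable section SelflessFactorAux

open Filter ComplexConjugate

namespace WStarProbAux

variable (A : WStarProb)

lemma mem_smul (c : ℂ) {x : A.H →L[ℂ] A.H} (hx : x ∈ A.M) : c • x ∈ A.M :=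
  A.M.toStarSubalgebra.smul_mem hx c

lemma phi_add (x y : A.H →L[ℂ] A.H) : A.φ (x + y) = A.φ x + A.φ y :=
  A.φ_linear.map_add x y

lemma phi_smul (c : ℂ) (x : A.H →L[ℂ] A.H) : A.φ (c • x) = c * A.φ x := by
  rw [A.φ_linear.map_smul]
  rfl

lemma pos_re {m : A.H →L[ℂ] A.H} (hm : m ∈ A.M) : 0 ≤ (A.φ (star m * m)).re :=
  (A.φ_pos m hm).1

lemma pos_im {m : A.H →L[ℂ] A.H} (hm : m ∈ A.M) : (A.φ (star m * m)).im = 0 :=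
  (A.φ_pos m hm).2

lemma phi_expand (c d : ℂ) (m n : A.H →L[ℂ] A.H) :
    A.φ (star (c • m + d • n) * (c • m + d • n)) =
      (star c * c) * A.φ (star m * m) + (star c * d) * A.φ (star m * n)
      + (star d * c) * A.φ (star n * m) + (star d * d) * A.φ (star n * n) := by
  have e : star (c • m + d • n) * (c • m + d • n) =
      (star c * c) • (star m * m) + ((star c * d) • (star m * n)
      + ((star d * c) • (star n * m) + (star d * d) • (star n * n))) := by
    simp only [star_add, star_smul, add_mul, mul_add, smul_add, smul_mul_assoc,
      mul_smul_comm, smul_smul]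
    module
  rw [e, phi_add, phi_add, phi_add, phi_smul, phi_smul, phi_smul, phi_smul]; ring

lemma herm {m n : A.H →L[ℂ] A.H} (hm : m ∈ A.M) (hn : n ∈ A.M) :
    A.φ (star n * m) = conj (A.φ (star m * n)) := by
  set u := A.φ (star m * n) with hu
  set v := A.φ (star n * m) with hv
  have key : ∀ c : ℂ, (c * u).im + (star c * v).im = 0 := by
    intro c
    have hmem : (1 : ℂ) • m + c • n ∈ A.M := add_mem (by simpa using hm) (mem_smul A c hn)
    have h := (A.φ_pos _ hmem).2
    rw [phi_expand] at h
    have him : ((star c * c) * A.φ (star n * n)).im = 0 := by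
      have h1 : (star c * c).im = 0 := by
        rw [Complex.star_def, Complex.mul_im, Complex.conj_re, Complex.conj_im]; ring
      rw [Complex.mul_im, h1, pos_im A hn]; ring
    simp only [star_one, one_mul, mul_one, Complex.add_im, pos_im A hm, him, ← hu, ← hv] at h
    linarith [h]
  have k1 := key 1
  have kI := key Complex.I
  simp [Complex.mul_im] at k1 kI
  apply Complex.ext
  · simp only [Complex.conj_re]; linarith [kI]
  · simp only [Complex.conj_im]; linarith [k1]

lemma phi_star {m : A.H →L[ℂ] A.H} (hm : m ∈ A.M) : A.φ (star m) = conj (A.φ m) := by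
  have h := herm A hm (one_mem A.M)
  rw [star_one, one_mul, mul_one] at h
  calc A.φ (star m) = conj (conj (A.φ (star m))) := (Complex.conj_conj _).symm
  _ = conj (A.φ m) := by rw [← h]

lemma phi_cs {m n : A.H →L[ℂ] A.H} (hm : m ∈ A.M) (hn : n ∈ A.M) :
    ‖A.φ (star m * n)‖ ^ 2 ≤ (A.φ (star m * m)).re * (A.φ (star n * n)).re := by
  set u := A.φ (star m * n) with hu
  rcases eq_or_ne u 0 with h0 | h0
  · rw [h0]; simpa using mul_nonneg (pos_re A hm) (pos_re A hn)
  · set c : ℂ := conj u / (‖u‖ : ℂ) with hc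
    have hun : (‖u‖ : ℂ) ≠ 0 := by
      simpa [Complex.ofReal_eq_zero] using norm_ne_zero_iff.mpr h0
    have hur : ‖u‖ ≠ 0 := norm_ne_zero_iff.mpr h0
    have habs : (starRingEnd ℂ) u * u = ((‖u‖ * ‖u‖ : ℝ) : ℂ) := by
      rw [mul_comm, Complex.mul_conj]
      norm_cast
      rw [← Complex.sq_norm]; ring
    have hcu : c * u = (‖u‖ : ℂ) := by
      rw [hc, div_mul_eq_mul_div, habs]
      push_cast
      field_simp
    have hccu : conj c * conj u = (‖u‖ : ℂ) := by
      rw [← map_mul, hcu, Complex.conj_ofReal]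
    have hcc : star c * c = 1 := by
      rw [Complex.star_def, hc, map_div₀, Complex.conj_conj, Complex.conj_ofReal]
      rw [div_mul_div_comm, Complex.mul_conj]
      rw [show ((Complex.normSq u : ℝ) : ℂ) = ((‖u‖ * ‖u‖ : ℝ) : ℂ) by
        norm_cast; rw [← Complex.sq_norm]; ring]
      push_cast
      have habs0 : ((‖u‖ : ℝ) : ℂ) ≠ 0 := by
        exact hun
      exact div_self (mul_ne_zero habs0 habs0)
    set A₀ := (A.φ (star m * m)).re with hA₀
    set D₀ := (A.φ (star n * n)).re with hD₀
    have hmmr : A.φ (star m * m) = (A₀ : ℂ) := by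
      apply Complex.ext <;> simp [hA₀, pos_im A hm]
    have hnnr : A.φ (star n * n) = (D₀ : ℂ) := by
      apply Complex.ext <;> simp [hD₀, pos_im A hn]
    have hvu : A.φ (star n * m) = conj u := herm A hm hn
    have quad : ∀ s : ℝ, 0 ≤ A₀ * (s * s) + (2 * ‖u‖) * s + D₀ := by
      intro s
      have hmem : (s : ℂ) • m + c • n ∈ A.M := add_mem (mem_smul A _ hm) (mem_smul A _ hn)
      have hp := (A.φ_pos _ hmem).1
      rw [phi_expand] at hp
      have hre : (star (s:ℂ) * (s:ℂ)) * A.φ (star m * m) + (star (s:ℂ) * c) * A.φ (star m * n)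
          + (star c * (s:ℂ)) * A.φ (star n * m) + (star c * c) * A.φ (star n * n)
          = ((A₀ * (s * s) + (2 * ‖u‖) * s + D₀ : ℝ) : ℂ) := by
        rw [hmmr, hnnr, hvu, hcc, ← hu]
        simp only [Complex.star_def, Complex.conj_ofReal]
        have e1 : ((s:ℂ) * c) * u = (s:ℂ) * (‖u‖:ℂ) := by rw [mul_assoc, hcu]
        have e2 : (conj c * (s:ℂ)) * conj u = (s:ℂ) * (‖u‖:ℂ) := by
          rw [mul_comm (conj c) ((s:ℂ)), mul_assoc, hccu]
        rw [e1, e2]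
        push_cast
        ring
      rw [hre] at hp
      simpa using hp
    have hd := discrim_le_zero quad
    rw [discrim] at hd
    have hA0 : 0 ≤ A₀ := pos_re A hm
    have hD0 : 0 ≤ D₀ := pos_re A hn
    nlinarith [norm_nonneg u, hd]

lemma phi_bound : ∃ K : ℝ, 0 ≤ K ∧ ∀ m : A.H →L[ℂ] A.H, ‖A.φ m‖ ≤ K * ‖m‖ := by
  obtain ⟨ξ, η, hξ, hη, hrep⟩ := A.φ_normal
  have hsummable : Summable (fun n => ‖ξ n‖ * ‖η n‖) := by
    apply Summable.of_nonneg_of_le (fun n => by positivity)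
      (fun n => ?_) ((hξ.add hη).div_const 2)
    nlinarith [sq_nonneg (‖ξ n‖ - ‖η n‖)]
  refine ⟨∑' n, ‖ξ n‖ * ‖η n‖, tsum_nonneg (fun n => by positivity), fun m => ?_⟩
  have hterm : ∀ n, ‖(inner ℂ (ξ n) (m (η n)) : ℂ)‖ ≤ ‖ξ n‖ * ‖η n‖ * ‖m‖ := by
    intro n
    calc ‖(inner ℂ (ξ n) (m (η n)) : ℂ)‖ ≤ ‖ξ n‖ * ‖m (η n)‖ := norm_inner_le_norm _ _
    _ ≤ ‖ξ n‖ * (‖m‖ * ‖η n‖) :=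
        mul_le_mul_of_nonneg_left (m.le_opNorm _) (norm_nonneg _)
    _ = ‖ξ n‖ * ‖η n‖ * ‖m‖ := by ring
  have hs2 : Summable (fun n => ‖(inner ℂ (ξ n) (m (η n)) : ℂ)‖) :=
    Summable.of_nonneg_of_le (fun n => norm_nonneg _) hterm (hsummable.mul_right _)
  rw [hrep m]
  calc ‖∑' n, (inner ℂ (ξ n) (m (η n)) : ℂ)‖ ≤ ∑' n, ‖(inner ℂ (ξ n) (m (η n)) : ℂ)‖ :=
        norm_tsum_le_tsum_norm hs2
  _ ≤ ∑' n, ‖ξ n‖ * ‖η n‖ * ‖m‖ := Summable.tsum_le_tsum hterm hs2 (hsummable.mul_right _)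
  _ = (∑' n, ‖ξ n‖ * ‖η n‖) * ‖m‖ := tsum_mul_right

lemma ofFn_prod4 {α : Type} [Monoid α] (p q r s : α) :
    (List.ofFn ![p, q, r, s]).prod = p * (q * (r * s)) := by
  simp [List.ofFn_succ, Matrix.cons_val_zero, Matrix.cons_val_succ]

lemma ofFn_prod3 {α : Type} [Monoid α] (p q r : α) :
    (List.ofFn ![p, q, r]).prod = p * (q * r) := by
  simp [List.ofFn_succ, Matrix.cons_val_zero, Matrix.cons_val_succ]

lemma central_null {I : Type} (U : Ultrafilter I) {z : A.H →L[ℂ] A.H}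
    (hzM : z ∈ A.M) (hzc : ∀ x ∈ A.M, z * x = x * z)
    {y : I → A.H →L[ℂ] A.H} (hy : y ∈ BddSeq A I) (hynull : StrongStarNull A U y) :
    StrongStarNull A U (fun i => y i * z) := by
  obtain ⟨hyM, C0, hC0⟩ := hy
  set C := max C0 0 with hC
  have hC0' : ∀ i, ‖y i‖ ≤ C := fun i => le_trans (hC0 i) (le_max_left _ _)
  have hCnn : (0:ℝ) ≤ C := le_max_right _ _
  obtain ⟨K, hK0, hKb⟩ := phi_bound A
  have hzc' : ∀ x ∈ A.M, star z * x = x * star z := by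
    intro x hx
    have h := hzc (star x) (star_mem hx)
    calc star z * x = star (star x * z) := by rw [star_mul, star_star]
    _ = star (z * star x) := by rw [← h]
    _ = x * star z := by rw [star_mul, star_star]
  set r1 := fun i => (A.φ (star (y i) * y i)).re with hr1def
  set r2 := fun i => (A.φ (y i * star (y i))).re with hr2def
  have hr1nn : ∀ i, 0 ≤ r1 i := fun i => pos_re A (hyM i)
  have hr2nn : ∀ i, 0 ≤ r2 i := fun i => by
    have := pos_re A (star_mem (hyM i)); rwa [star_star] at this
  have hrsum : Tendsto (fun i => r1 i + r2 i) (U : Filter I) (nhds 0) := by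
    have h1 : Tendsto (fun i => (A.φ (star (y i) * y i + y i * star (y i))).re)
        (U : Filter I) (nhds 0) := by
      have := (Complex.continuous_re.tendsto 0).comp hynull
      simpa [Function.comp_def] using this
    refine h1.congr (fun i => ?_)
    rw [phi_add, Complex.add_re]
  have hr1t : Tendsto r1 (U : Filter I) (nhds 0) :=
    tendsto_of_tendsto_of_tendsto_of_le_of_le tendsto_const_nhds hrsum hr1nn
      (fun i => le_add_of_nonneg_right (hr2nn i))
  have hr2t : Tendsto r2 (U : Filter I) (nhds 0) :=
    tendsto_of_tendsto_of_tendsto_of_le_of_le tendsto_const_nhds hrsum hr2nn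
      (fun i => le_add_of_nonneg_left (hr1nn i))
  set D := K * ((C * (‖z‖ * ‖z‖)) * (C * (‖z‖ * ‖z‖))) with hD
  have hDnn : 0 ≤ D := by positivity
  have hb : ∀ (mm nn : A.H →L[ℂ] A.H), mm ∈ A.M → nn ∈ A.M → ‖nn‖ ≤ C * (‖z‖ * ‖z‖) →
      ‖A.φ (star mm * nn)‖ ≤ Real.sqrt ((A.φ (star mm * mm)).re * D) := by
    intro mm nn hmm hnn hnorm
    have cs := phi_cs A hmm hnn
    have h2 : (A.φ (star nn * nn)).re ≤ D := by
      have h1 : (A.φ (star nn * nn)).re ≤ ‖A.φ (star nn * nn)‖ := Complex.re_le_norm _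
      have h2' : ‖A.φ (star nn * nn)‖ ≤ K * ‖star nn * nn‖ := hKb _
      have h3 : ‖star nn * nn‖ ≤ ‖nn‖ * ‖nn‖ := by
        calc ‖star nn * nn‖ ≤ ‖star nn‖ * ‖nn‖ := norm_mul_le _ _
        _ = ‖nn‖ * ‖nn‖ := by rw [norm_star]
      have h4 : ‖nn‖ * ‖nn‖ ≤ (C * (‖z‖ * ‖z‖)) * (C * (‖z‖ * ‖z‖)) :=
        mul_le_mul hnorm hnorm (norm_nonneg _) (by positivity)
      have h5 : K * ‖star nn * nn‖ ≤ D := by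
        rw [hD]
        exact mul_le_mul_of_nonneg_left (le_trans h3 h4) hK0
      linarith
    have hle : ‖A.φ (star mm * nn)‖ ^ 2 ≤ (A.φ (star mm * mm)).re * D :=
      le_trans cs (mul_le_mul_of_nonneg_left h2 (pos_re A hmm))
    have := Real.sqrt_le_sqrt hle
    rwa [Real.sqrt_sq (norm_nonneg _)] at this
  have key : ∀ i, ‖A.φ (star (y i * z) * (y i * z) + (y i * z) * star (y i * z))‖
      ≤ Real.sqrt (r1 i * D) + Real.sqrt (r2 i * D) := by
    intro i
    have hyiM := hyM i
    have hn1M : y i * (star z * z) ∈ A.M := mul_mem hyiM (mul_mem (star_mem hzM) hzM)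
    have hn2M : (z * star z) * star (y i) ∈ A.M :=
      mul_mem (mul_mem hzM (star_mem hzM)) (star_mem hyiM)
    have ew1 : star (y i * z) * (y i * z) = star (y i) * (y i * (star z * z)) := by
      have hmm : star (y i) * (y i * z) ∈ A.M :=
        mul_mem (star_mem hyiM) (mul_mem hyiM hzM)
      calc star (y i * z) * (y i * z) = star z * (star (y i) * (y i * z)) := by
            rw [star_mul, mul_assoc]
      _ = (star (y i) * (y i * z)) * star z := hzc' _ hmm
      _ = star (y i) * (y i * (z * star z)) := by simp only [mul_assoc]
      _ = star (y i) * (y i * (star z * z)) := by rw [← hzc' z hzM]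
    have ew2 : (y i * z) * star (y i * z) = y i * ((z * star z) * star (y i)) := by
      rw [star_mul]
      simp only [mul_assoc]
    have t1 : ‖A.φ (star (y i) * (y i * (star z * z)))‖ ≤ Real.sqrt (r1 i * D) := by
      have hnorm1 : ‖y i * (star z * z)‖ ≤ C * (‖z‖ * ‖z‖) := by
        calc ‖y i * (star z * z)‖ ≤ ‖y i‖ * ‖star z * z‖ := norm_mul_le _ _
        _ ≤ ‖y i‖ * (‖star z‖ * ‖z‖) :=
            mul_le_mul_of_nonneg_left (norm_mul_le _ _) (norm_nonneg _)
        _ = ‖y i‖ * (‖z‖ * ‖z‖) := by rw [norm_star]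
        _ ≤ C * (‖z‖ * ‖z‖) := mul_le_mul_of_nonneg_right (hC0' i) (by positivity)
      exact hb (y i) _ hyiM hn1M hnorm1
    have t2 : ‖A.φ (y i * ((z * star z) * star (y i)))‖ ≤ Real.sqrt (r2 i * D) := by
      have hnorm2 : ‖(z * star z) * star (y i)‖ ≤ C * (‖z‖ * ‖z‖) := by
        calc ‖(z * star z) * star (y i)‖ ≤ ‖z * star z‖ * ‖star (y i)‖ := norm_mul_le _ _
        _ ≤ (‖z‖ * ‖star z‖) * ‖star (y i)‖ :=
            mul_le_mul_of_nonneg_right (norm_mul_le _ _) (norm_nonneg _)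
        _ = (‖z‖ * ‖z‖) * ‖y i‖ := by rw [norm_star, norm_star]
        _ ≤ (‖z‖ * ‖z‖) * C := mul_le_mul_of_nonneg_left (hC0' i) (by positivity)
        _ = C * (‖z‖ * ‖z‖) := by ring
      have := hb (star (y i)) _ (star_mem hyiM) hn2M hnorm2
      rwa [star_star] at this
    calc ‖A.φ (star (y i * z) * (y i * z) + (y i * z) * star (y i * z))‖
        = ‖A.φ (star (y i * z) * (y i * z)) + A.φ ((y i * z) * star (y i * z))‖ := by
          rw [phi_add]
    _ ≤ ‖A.φ (star (y i * z) * (y i * z))‖ + ‖A.φ ((y i * z) * star (y i * z))‖ :=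
          norm_add_le _ _
    _ ≤ Real.sqrt (r1 i * D) + Real.sqrt (r2 i * D) := by
          rw [ew1, ew2]; exact add_le_add t1 t2
  have htend : Tendsto (fun i => Real.sqrt (r1 i * D) + Real.sqrt (r2 i * D))
      (U : Filter I) (nhds 0) := by
    have s1 : Tendsto (fun i => Real.sqrt (r1 i * D)) (U : Filter I) (nhds 0) := by
      have hm : Tendsto (fun i => r1 i * D) (U : Filter I) (nhds 0) := by
        simpa using hr1t.mul_const D
      have := (Real.continuous_sqrt.tendsto 0).comp hm
      simpa [Function.comp_def] using this
    have s2 : Tendsto (fun i => Real.sqrt (r2 i * D)) (U : Filter I) (nhds 0) := by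
      have hm : Tendsto (fun i => r2 i * D) (U : Filter I) (nhds 0) := by
        simpa using hr2t.mul_const D
      have := (Real.continuous_sqrt.tendsto 0).comp hm
      simpa [Function.comp_def] using this
    simpa using s1.add s2
  exact squeeze_zero_norm key htend

lemma const_multiplier {I : Type} (U : Ultrafilter I) {z : A.H →L[ℂ] A.H}
    (hzM : z ∈ A.M) (hzc : ∀ x ∈ A.M, z * x = x * z) :
    (fun _ : I => z) ∈ MultiplierSeq A U := by
  refine ⟨⟨fun _ => hzM, ‖z‖, fun _ => le_rfl⟩, ?_⟩
  intro y hy hynull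
  have h1 : StrongStarNull A U (fun i => y i * z) := central_null A U hzM hzc hy hynull
  constructor
  · have he : (fun i => (fun _ : I => z) i * y i) = fun i => y i * z :=
      funext fun i => hzc (y i) (hy.1 i)
    rw [he]; exact h1
  · exact h1

end WStarProbAux

end SelflessFactorAux


/-- If a diffuse separable W*-probability space `(M, φ)` is selfless, then `M` is a
factor, i.e. the center of `M` equals `ℂ1`. -/
theorem selfless_implies_factor
    (A : WStarProb) (hsep : A.Separable) (hdiff : A.Diffuse)
    (h : Selfless A) : A.IsFactor := by
  classical
  intro z hz hzc
  by_cases htriv : ∀ m ∈ A.M, ∃ c : ℂ, m = c • (1 : A.H →L[ℂ] A.H)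
  · exact htriv z hz
  · push_neg at htriv
    obtain ⟨x0, hx0M, hx0⟩ := htriv
    set xt := x0 + (-(A.φ x0)) • (1 : A.H →L[ℂ] A.H) with hxtdef
    have hxtM : xt ∈ A.M := add_mem hx0M (WStarProbAux.mem_smul A _ (one_mem _))
    have hxt0 : A.φ xt = 0 := by
      rw [hxtdef, WStarProbAux.phi_add, WStarProbAux.phi_smul, A.φ_one]; ring
    have hxtne : xt ≠ 0 := by
      intro h0
      apply hx0 (A.φ x0)
      have h1 : x0 + (-(A.φ x0)) • (1 : A.H →L[ℂ] A.H) = 0 := by rw [← hxtdef]; exact h0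
      rw [neg_smul] at h1
      exact add_neg_eq_zero.mp h1
    have hxx : A.φ (star xt * xt) ≠ 0 := fun h0 => hxtne (A.φ_faithful xt hxtM h0)
    obtain ⟨P, fp, hec⟩ := h
    obtain ⟨-, I, U, P', d, g, -, hup, -, hcomp⟩ := hec
    obtain ⟨q, hq, hqd⟩ := hup
    obtain ⟨hq1, hq2, hq3, hq4, hq5, hq6, hq7, hq8, hq9⟩ := hq
    have hxP : fp.inr.toFun xt ∈ P.M := fp.inr.mem' xt hxtM
    have hzP : fp.inl.toFun z ∈ P.M := fp.inl.mem' z hz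
    have hgx : g.toFun (fp.inr.toFun xt) ∈ P'.M := g.mem' _ hxP
    obtain ⟨y, hy, hqy⟩ := hq2 _ hgx
    have hconstz : (fun _ : I => z) ∈ MultiplierSeq A U :=
      WStarProbAux.const_multiplier A U hz hzc
    have h5 : q ((fun _ : I => z) * y) = q (fun _ : I => z) * q y := hq5 _ hconstz _ hy
    have h5' : q (y * (fun _ : I => z)) = q y * q (fun _ : I => z) := hq5 _ hy _ hconstz
    have heq : ((fun _ : I => z) * y) = (y * (fun _ : I => z)) := by
      funext i; exact hzc (y i) (hy.1.1 i)
    have hdz : q (fun _ : I => z) = d.toFun z := hqd z hz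
    have hcomm' : d.toFun z * g.toFun (fp.inr.toFun xt)
        = g.toFun (fp.inr.toFun xt) * d.toFun z := by
      rw [← hdz, ← hqy, ← h5, heq, h5']
    have hu : fp.inl.toFun z * fp.inr.toFun xt ∈ P.M := mul_mem hzP hxP
    have hv : fp.inr.toFun xt * fp.inl.toFun z ∈ P.M := mul_mem hxP hzP
    have hvm : (-1 : ℂ) • (fp.inr.toFun xt * fp.inl.toFun z) ∈ P.M :=
      WStarProbAux.mem_smul P _ hv
    have hgz : g.toFun (fp.inl.toFun z) = d.toFun z := hcomp z hz
    have hg0 : g.toFun (fp.inl.toFun z * fp.inr.toFun xt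
        + (-1 : ℂ) • (fp.inr.toFun xt * fp.inl.toFun z)) = 0 := by
      rw [g.add' _ hu _ hvm, g.smul' (-1 : ℂ) _ hv, g.mul' _ hzP _ hxP, g.mul' _ hxP _ hzP,
        hgz, hcomm']
      simp
    have hcommP : fp.inl.toFun z * fp.inr.toFun xt = fp.inr.toFun xt * fp.inl.toFun z := by
      have h0 := g.inj' _ (add_mem hu hvm) hg0
      rw [neg_one_smul] at h0
      exact add_neg_eq_zero.mp h0
    -- freeness computation
    set c0 := A.φ z with hc0
    set z0 := z + (-c0) • (1 : A.H →L[ℂ] A.H) with hz0def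
    have hz0M : z0 ∈ A.M := add_mem hz (WStarProbAux.mem_smul A _ (one_mem _))
    have hz00 : A.φ z0 = 0 := by
      rw [hz0def, WStarProbAux.phi_add, WStarProbAux.phi_smul, A.φ_one, ← hc0]; ring
    set a := fp.inl.toFun z0 with hadef
    set b := fp.inr.toFun xt with hbdef
    have ha_eq : a = fp.inl.toFun z + (-c0) • (1 : P.H →L[ℂ] P.H) := by
      rw [hadef, hz0def, fp.inl.add' z hz _ (WStarProbAux.mem_smul A _ (one_mem _)),
        fp.inl.smul' (-c0) 1 (one_mem _), fp.inl.one']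
    have hab : a * b = b * a := by
      rw [ha_eq, add_mul, mul_add, smul_mul_assoc, mul_smul_comm, one_mul, mul_one, hcommP]
    have hSa : P.φ a = 0 := by
      rw [hadef, fp.inl.state' _ hz0M, hz00]
    have hsa_im : star a = fp.inl.toFun (star z0) := (fp.inl.star' z0 hz0M).symm
    have hSsa : P.φ (star a) = 0 := by
      rw [hsa_im, fp.inl.state' _ (star_mem hz0M), WStarProbAux.phi_star A hz0M, hz00]
      simp
    have hSb : P.φ b = 0 := by rw [hbdef, fp.inr.state' _ hxtM]; exact hxt0
    have hsb_im : star b = fp.inr.toFun (star xt) := (fp.inr.star' xt hxtM).symm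
    have hSsb : P.φ (star b) = 0 := by
      rw [hsb_im, fp.inr.state' _ (star_mem hxtM), WStarProbAux.phi_star A hxtM, hxt0]
      simp
    set t := A.φ (star z0 * z0) with ht
    set m2 := star z0 * z0 + (-t) • (1 : A.H →L[ℂ] A.H) with hm2def
    have hm2M : m2 ∈ A.M :=
      add_mem (mul_mem (star_mem hz0M) hz0M) (WStarProbAux.mem_smul A _ (one_mem _))
    set a2 := fp.inl.toFun m2 with ha2def
    have hsaa : star a * a = a2 + t • (1 : P.H →L[ℂ] P.H) := by
      have h1 : star a * a = fp.inl.toFun (star z0 * z0) := by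
        rw [hsa_im, hadef, ← fp.inl.mul' _ (star_mem hz0M) _ hz0M]
      have h2 : a2 = fp.inl.toFun (star z0 * z0) + (-t) • (1 : P.H →L[ℂ] P.H) := by
        rw [ha2def, hm2def,
          fp.inl.add' _ (mul_mem (star_mem hz0M) hz0M) _ (WStarProbAux.mem_smul A _ (one_mem _)),
          fp.inl.smul' (-t) 1 (one_mem _), fp.inl.one']
      rw [h1, h2, neg_smul]; abel
    have hSa2 : P.φ a2 = 0 := by
      rw [ha2def, fp.inl.state' _ hm2M, hm2def, WStarProbAux.phi_add, WStarProbAux.phi_smul,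
        A.φ_one, ← ht]
      ring
    have haS : a ∈ fp.inl.toFun '' (A.M : Set (A.H →L[ℂ] A.H)) := ⟨z0, hz0M, rfl⟩
    have hsaS : star a ∈ fp.inl.toFun '' (A.M : Set (A.H →L[ℂ] A.H)) :=
      ⟨star z0, star_mem hz0M, hsa_im.symm⟩
    have ha2S : a2 ∈ fp.inl.toFun '' (A.M : Set (A.H →L[ℂ] A.H)) := ⟨m2, hm2M, rfl⟩
    have hbT : b ∈ fp.inr.toFun '' (A.M : Set (A.H →L[ℂ] A.H)) := ⟨xt, hxtM, rfl⟩
    have hsbT : star b ∈ fp.inr.toFun '' (A.M : Set (A.H →L[ℂ] A.H)) :=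
      ⟨star xt, star_mem hxtM, hsb_im.symm⟩
    have hw4 : P.φ (star b * (star a * (b * a))) = 0 := by
      have hfree := fp.free 3 ![star b, star a, b, a] ![false, true, false, true]
        (by
          intro k
          fin_cases k <;>
            simp only [Matrix.cons_val_zero, Matrix.cons_val_one, Matrix.head_cons,
              Matrix.cons_val_two, Matrix.tail_cons, Matrix.cons_val_three, Bool.cond_false,
              Bool.cond_true, Fin.isValue, Matrix.cons_val_fin_one, Fin.mk_zero, Fin.mk_one]
          · exact hsbT
          · exact hsaS
          · exact hbT
          · exact haS)
        (by
          intro k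
          fin_cases k <;>
            simp only [Matrix.cons_val_zero, Matrix.cons_val_one, Matrix.head_cons,
              Matrix.cons_val_two, Matrix.tail_cons, Matrix.cons_val_three, Fin.isValue]
          · exact hSsb
          · exact hSsa
          · exact hSb
          · exact hSa)
        (by decide)
      rwa [WStarProbAux.ofFn_prod4] at hfree
    have hw3 : P.φ (star b * (a2 * b)) = 0 := by
      have hfree := fp.free 2 ![star b, a2, b] ![false, true, false]
        (by
          intro k
          fin_cases k <;>
            simp only [Matrix.cons_val_zero, Matrix.cons_val_one, Matrix.head_cons,
              Matrix.cons_val_two, Matrix.tail_cons, Bool.cond_false, Bool.cond_true,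
              Fin.isValue]
          · exact hsbT
          · exact ha2S
          · exact hbT)
        (by
          intro k
          fin_cases k <;>
            simp only [Matrix.cons_val_zero, Matrix.cons_val_one, Matrix.head_cons,
              Matrix.cons_val_two, Matrix.tail_cons, Fin.isValue]
          · exact hSsb
          · exact hSa2
          · exact hSb)
        (by decide)
      rwa [WStarProbAux.ofFn_prod3] at hfree
    have e1 : star b * (star a * (a * b)) = star b * (a2 * b) + t • (star b * b) := by
      rw [← mul_assoc (star a) a b, hsaa, add_mul, smul_mul_assoc, one_mul, mul_add,
        mul_smul_comm]
    have e2 : P.φ (star b * (star a * (a * b))) = t * P.φ (star b * b) := by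
      rw [e1, WStarProbAux.phi_add, WStarProbAux.phi_smul, hw3]
      ring
    have e3 : P.φ (star b * (star a * (a * b))) = 0 := by rw [hab]; exact hw4
    have ht0 : t * P.φ (star b * b) = 0 := by rw [← e2, e3]
    have hbb : P.φ (star b * b) = A.φ (star xt * xt) := by
      rw [hsb_im, hbdef, ← fp.inr.mul' _ (star_mem hxtM) _ hxtM,
        fp.inr.state' _ (mul_mem (star_mem hxtM) hxtM)]
    have ht00 : t = 0 := by
      rcases mul_eq_zero.mp ht0 with h' | h'
      · exact h'
      · exact absurd (hbb ▸ h') hxx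
    have hz0 : z0 = 0 := A.φ_faithful z0 hz0M (by rw [← ht]; exact ht00)
    refine ⟨c0, ?_⟩
    have h1 : z + (-c0) • (1 : A.H →L[ℂ] A.H) = 0 := by rw [← hz0def]; exact hz0
    rw [neg_smul] at h1
    exact add_neg_eq_zero.mp h1
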